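/- Soundness of the BPEL/PiCore bisimulation: for every BPEL activity B, PiCore event system ES and state s, if B and ES are bisimilar at s (Σ ⊢ (B,s) ≈ (ES,s)), then they are trace-equivalent at s (Σ ⊢ (B,s) ≈≈ (ES,s)): every BPEL computation from (B,s) has a pointwise-equivalent PiCore computation from (ES,s), and conversely. -/

import Mathlib

namespace PiCore

/-- Event systems of the PiCore event specification language. -/
inductive EventSys (Lbl Prog St : Type) : Type where
  | basic (ev : Set (Lbl × Set St × Prog))
  | atom (ev : Set (Lbl × Set St × Prog))
  | trig (P : Prog)
  | seq (S1 S2 : EventSys Lbl Prog St)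
  | choice (S1 S2 : EventSys Lbl Prog St)
  | join (S1 S2 : EventSys Lbl Prog St)
  | iter (b : Set St) (S : EventSys Lbl Prog St)

/-- Transition kinds of event systems: anonymous τ, event entry, atomic event entry. -/
inductive TranKind (Lbl : Type) : Type where
  | tau
  | evt (l : Lbl)
  | aevt (l : Lbl)

variable {Lbl Prog St Env : Type} (K : Type)
variable (ptran : Env → Prog × St → Prog × St → Prop) (bot : Prog)

/-- Labelled small-step semantics of event systems. -/
inductive esStep (Γ : Env) :
    EventSys Lbl Prog St × St → TranKind Lbl × K → EventSys Lbl Prog St × St → Prop where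
  | basicEvt {ev : Set (Lbl × Set St × Prog)} {l g P s κ}
      (h1 : (l, g, P) ∈ ev) (h2 : s ∈ g) :
      esStep Γ (.basic ev, s) (.evt l, κ) (.trig P, s)
  | atomEvt {ev : Set (Lbl × Set St × Prog)} {l g P s t κ}
      (h1 : (l, g, P) ∈ ev) (h2 : s ∈ g)
      (h3 : Relation.ReflTransGen (fun c c' => ptran Γ c c') (P, s) (bot, t)) :
      esStep Γ (.atom ev, s) (.aevt l, κ) (.trig bot, t)
  | trigEvt {P Q s t κ} (h : ptran Γ (P, s) (Q, t)) :
      esStep Γ (.trig P, s) (.tau, κ) (.trig Q, t)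
  | seqStep {S1 S1' S2 s t} {δ : TranKind Lbl × K}
      (h : esStep Γ (S1, s) δ (S1', t)) (hne : S1' ≠ .trig bot) :
      esStep Γ (.seq S1 S2, s) δ (.seq S1' S2, t)
  | seqFin {S1 S2 s t} {δ : TranKind Lbl × K}
      (h : esStep Γ (S1, s) δ (.trig bot, t)) :
      esStep Γ (.seq S1 S2, s) δ (S2, t)
  | choice1 {S1 S2 S1' s t} {δ : TranKind Lbl × K}
      (h : esStep Γ (S1, s) δ (S1', t)) :
      esStep Γ (.choice S1 S2, s) δ (S1', t)
  | choice2 {S1 S2 S2' s t} {δ : TranKind Lbl × K}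
      (h : esStep Γ (S2, s) δ (S2', t)) :
      esStep Γ (.choice S1 S2, s) δ (S2', t)
  | join1 {S1 S2 S1' s t} {δ : TranKind Lbl × K}
      (h : esStep Γ (S1, s) δ (S1', t)) :
      esStep Γ (.join S1 S2, s) δ (.join S1' S2, t)
  | join2 {S1 S2 S2' s t} {δ : TranKind Lbl × K}
      (h : esStep Γ (S2, s) δ (S2', t)) :
      esStep Γ (.join S1 S2, s) δ (.join S1 S2', t)
  | joinFin {s κ} :
      esStep Γ (.join (.trig bot) (.trig bot), s) (.tau, κ) (.trig bot, s)
  | iterT {b S s κ} (h : s ∈ b) (hne : S ≠ .trig bot) :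
      esStep Γ (.iter b S, s) (.tau, κ) (.seq S (.iter b S), s)
  | iterF {b S s κ} (h : s ∉ b) :
      esStep Γ (.iter b S, s) (.tau, κ) (.trig bot, s)

/-- Linear computations of event systems. -/
inductive cpts (Γ : Env) : List (EventSys Lbl Prog St × St) → Prop where
  | one {S s} : cpts Γ [(S, s)]
  | env {S s t cs} (h : cpts Γ ((S, t) :: cs)) : cpts Γ ((S, s) :: (S, t) :: cs)
  | act {S1 S2 s t cs} {δ : TranKind Lbl × K}
      (h1 : esStep K ptran bot Γ (S1, s) δ (S2, t))
      (h2 : cpts Γ ((S2, t) :: cs)) : cpts Γ ((S1, s) :: (S2, t) :: cs)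

/-- Sequential lifting of a computation. -/
def liftSeq (Q : EventSys Lbl Prog St) (c : List (EventSys Lbl Prog St × St)) :
    List (EventSys Lbl Prog St × St) :=
  c.map fun p => (.seq p.1 Q, p.2)

/-- Modular computations of event systems. -/
inductive cptsM (Γ : Env) : List (EventSys Lbl Prog St × St) → Prop where
  | one {S s} : cptsM Γ [(S, s)]
  | env {S s t cs} (h : cptsM Γ ((S, t) :: cs)) : cptsM Γ ((S, s) :: (S, t) :: cs)
  | trigEvt {P Q s t cs} (h : ptran Γ (P, s) (Q, t))
      (h2 : cptsM Γ ((.trig Q, t) :: cs)) :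
      cptsM Γ ((.trig P, s) :: (.trig Q, t) :: cs)
  | basicEvt {ev : Set (Lbl × Set St × Prog)} {l g P s cs}
      (h1 : (l, g, P) ∈ ev) (h2 : s ∈ g)
      (h3 : cptsM Γ ((.trig P, s) :: cs)) :
      cptsM Γ ((.basic ev, s) :: (.trig P, s) :: cs)
  | atomEvt {ev : Set (Lbl × Set St × Prog)} {l g P s t cs}
      (h1 : (l, g, P) ∈ ev) (h2 : s ∈ g)
      (h3 : Relation.ReflTransGen (fun c c' => ptran Γ c c') (P, s) (bot, t))
      (h4 : cptsM Γ ((.trig bot, t) :: cs)) :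
      cptsM Γ ((.atom ev, s) :: (.trig bot, t) :: cs)
  | seqStep {S1 S1' S2 s t cs} {δ : TranKind Lbl × K}
      (h : esStep K ptran bot Γ (S1, s) δ (S1', t)) (hne : S1' ≠ .trig bot)
      (h2 : cptsM Γ ((.seq S1' S2, t) :: cs)) :
      cptsM Γ ((.seq S1 S2, s) :: (.seq S1' S2, t) :: cs)
  | seqFin {S1 S2 s t cs} {δ : TranKind Lbl × K}
      (h : esStep K ptran bot Γ (S1, s) δ (.trig bot, t))
      (h2 : cptsM Γ ((S2, t) :: cs)) :
      cptsM Γ ((.seq S1 S2, s) :: (S2, t) :: cs)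
  | chc1 {S1 S2 S1' s t cs} {δ : TranKind Lbl × K}
      (h : esStep K ptran bot Γ (S1, s) δ (S1', t))
      (h2 : cptsM Γ ((S1', t) :: cs)) :
      cptsM Γ ((.choice S1 S2, s) :: (S1', t) :: cs)
  | chc2 {S1 S2 S2' s t cs} {δ : TranKind Lbl × K}
      (h : esStep K ptran bot Γ (S2, s) δ (S2', t))
      (h2 : cptsM Γ ((S2', t) :: cs)) :
      cptsM Γ ((.choice S1 S2, s) :: (S2', t) :: cs)
  | join1 {S1 S2 S1' s t cs} {δ : TranKind Lbl × K}
      (h : esStep K ptran bot Γ (S1, s) δ (S1', t))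
      (h2 : cptsM Γ ((.join S1' S2, t) :: cs)) :
      cptsM Γ ((.join S1 S2, s) :: (.join S1' S2, t) :: cs)
  | join2 {S1 S2 S2' s t cs} {δ : TranKind Lbl × K}
      (h : esStep K ptran bot Γ (S2, s) δ (S2', t))
      (h2 : cptsM Γ ((.join S1 S2', t) :: cs)) :
      cptsM Γ ((.join S1 S2, s) :: (.join S1 S2', t) :: cs)
  | joinFin {s cs} (h : cptsM Γ ((.trig bot, s) :: cs)) :
      cptsM Γ ((.join (.trig bot) (.trig bot), s) :: (.trig bot, s) :: cs)
  | iterF {b S s cs} (h : s ∉ b) (h2 : cptsM Γ ((.trig bot, s) :: cs)) :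
      cptsM Γ ((.iter b S, s) :: (.trig bot, s) :: cs)
  | iterTOne {b S s cs} (h : s ∈ b) (h2 : cptsM Γ ((S, s) :: cs)) :
      cptsM Γ ((.iter b S, s) :: liftSeq (.iter b S) ((S, s) :: cs))
  | iterTMore {b S s t cs cs'} {δ : TranKind Lbl × K}
      (h : s ∈ b) (h2 : cptsM Γ ((S, s) :: cs))
      (h3 : esStep K ptran bot Γ (((S, s) :: cs).getLast (List.cons_ne_nil _ _)) δ
              (.trig bot, t))
      (h4 : cptsM Γ ((.iter b S, t) :: cs')) :
      cptsM Γ ((.iter b S, s) ::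
        (liftSeq (.iter b S) ((S, s) :: cs) ++ (.iter b S, t) :: cs'))



end PiCore

namespace BPEL

open PiCore

/-- An IMP-like program language: the terminal program ⊥, atomic state
transformations `basic f`, and sequencing. -/
inductive Imp (St : Type) : Type where
  | fin
  | basic (f : St → St)
  | seq (P Q : Imp St)

/-- The `SKIP` statement. -/
def SKIP (St : Type) : Imp St := .basic id

/-- Small-step semantics of the IMP-like language. -/
inductive impTran {St : Type} : Imp St × St → Imp St × St → Prop where
  | basic {f : St → St} {s : St} : impTran (.basic f, s) (.fin, f s)
  | seqStep {P P' Q : Imp St} {s t : St}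
      (h : impTran (P, s) (P', t)) (hne : P' ≠ .fin) :
      impTran (.seq P Q, s) (.seq P' Q, t)
  | seqFin {P Q : Imp St} {s t : St} (h : impTran (P, s) (.fin, t)) :
      impTran (.seq P Q, s) (Q, t)

/-- Flow element of a BPEL activity: optional targets (a join condition and a
list of target links) and optional sources (links with transition conditions). -/
structure FlowEle (St : Type) : Type where
  targets : Option ((St → Prop) × List String)
  sources : Option (List (String × (St → Prop)))

mutual
/-- Abstract syntax of (a core subset of) BPEL activities. -/
inductive Activity (St : Type) : Type where
  | invoke (fls : FlowEle St) (ptl ptt opn : String) (spc : St → St)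
      (cts : List (String × Activity St)) (cta : Activity St)
  | receive (fls : FlowEle St) (ptl ptt opn : String) (spc : St → St)
  | reply (fls : FlowEle St) (ptl ptt opn : String)
  | assign (fls : FlowEle St) (spc : St → St)
  | wait (fls : FlowEle St) (time : ℕ)
  | empty (fls : FlowEle St)
  | seq (A1 A2 : Activity St)
  | ifA (c : Set St) (A1 A2 : Activity St)
  | whileA (c : Set St) (A : Activity St)
  | flow (A1 A2 : Activity St)
  | pick (H1 H2 : EventHandler St)
  | fin

/-- BPEL event handlers. -/
inductive EventHandler (St : Type) : Type where
  | onMessage (ptl ptt opn : String) (spc : St → St) (A : Activity St)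
  | onAlarm (time : ℕ) (A : Activity St)
end

section Sem
variable {St : Type}
variable (tick : St → ℕ)
variable (targetsSat : Option ((St → Prop) × List String) → St → Prop)
variable (fireSources : Option (List (String × (St → Prop))) → St → St)

/-- Small-step semantics of BPEL event handlers. -/
inductive ehStep : EventHandler St → St → Activity St → St → Prop where
  | onMessage {ptl ptt opn spc A s} :
      ehStep (.onMessage ptl ptt opn spc A) s A (spc s)
  | onAlarm {time A s} (h : time > tick s) :
      ehStep (.onAlarm time A) s A s

/-- Small-step operational semantics of BPEL activities. -/
inductive bpelStep : Activity St → St → Activity St → St → Prop where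
  | invokeSuc {fls ptl ptt opn spc cts cta s}
      (h : targetsSat fls.targets s) :
      bpelStep (.invoke fls ptl ptt opn spc cts cta) s .fin
        (fireSources fls.sources (spc s))
  | invokeFault {fls ptl ptt opn spc cts cta s} {evh : Activity St}
      (h : targetsSat fls.targets s)
      (hm : evh ∈ cts.map Prod.snd ∨ evh = cta) :
      bpelStep (.invoke fls ptl ptt opn spc cts cta) s evh
        (fireSources fls.sources s)
  | receive {fls ptl ptt opn spc s} (h : targetsSat fls.targets s) :
      bpelStep (.receive fls ptl ptt opn spc) s .fin
        (fireSources fls.sources (spc s))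
  | reply {fls ptl ptt opn s} (h : targetsSat fls.targets s) :
      bpelStep (.reply fls ptl ptt opn) s .fin (fireSources fls.sources s)
  | assign {fls spc s} (h : targetsSat fls.targets s) :
      bpelStep (.assign fls spc) s .fin (fireSources fls.sources (spc s))
  | wait {fls time s} (h : targetsSat fls.targets s) (ht : time > tick s) :
      bpelStep (.wait fls time) s .fin (fireSources fls.sources s)
  | empty {fls s} (h : targetsSat fls.targets s) :
      bpelStep (.empty fls) s .fin (fireSources fls.sources s)
  | seqStep {A1 A1' A2 s t} (h : bpelStep A1 s A1' t) (hne : A1' ≠ .fin) :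
      bpelStep (.seq A1 A2) s (.seq A1' A2) t
  | seqFin {A1 A2 s t} (h : bpelStep A1 s .fin t) :
      bpelStep (.seq A1 A2) s A2 t
  | ifT {c A1 A2 s} (h : s ∈ c) : bpelStep (.ifA c A1 A2) s A1 s
  | ifF {c A1 A2 s} (h : s ∉ c) : bpelStep (.ifA c A1 A2) s A2 s
  | whileT {c A s} (h : s ∈ c) (hne : A ≠ .fin) :
      bpelStep (.whileA c A) s (.seq A (.whileA c A)) s
  | whileF {c A s} (h : s ∉ c) : bpelStep (.whileA c A) s .fin s
  | flow1 {A1 A1' A2 s t} (h : bpelStep A1 s A1' t) :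
      bpelStep (.flow A1 A2) s (.flow A1' A2) t
  | flow2 {A1 A2 A2' s t} (h : bpelStep A2 s A2' t) :
      bpelStep (.flow A1 A2) s (.flow A1 A2') t
  | flowFin {s} : bpelStep (.flow .fin .fin) s .fin s
  | pick1 {H1 H2 A s t} (h : ehStep tick H1 s A t) :
      bpelStep (.pick H1 H2) s A t
  | pick2 {H1 H2 A s t} (h : ehStep tick H2 s A t) :
      bpelStep (.pick H1 H2) s A t

end Sem

/-- Labels of events in the PiCore translation of BPEL, encoding the activity
kind and its partner-link / port-type / operation names. -/
inductive EvtLbl : Type where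
  | invoke (ptl ptt opn : String)
  | receive (ptl ptt opn : String)
  | reply (ptl ptt opn : String)
  | assign
  | wait
  | empty
  | ifT
  | ifF
  | onMessage (ptl ptt opn : String)
  | onAlarm

/-- Event systems of the BPEL translation. -/
abbrev ES (St : Type) : Type := EventSys EvtLbl (Imp St) St

/-- Nondeterministic choice of a list of event systems. -/
def chooseList {St : Type} : List (ES St) → ES St
  | [] => .trig .fin
  | [a] => a
  | a :: b :: xs => .choice a (chooseList (b :: xs))

section Compile
variable {St : Type}
variable (tick : St → ℕ)
variable (targetsSat : Option ((St → Prop) × List String) → St → Prop)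
variable (fireSources : Option (List (String × (St → Prop))) → St → St)

/-- The failure event of an `invoke` activity: it only fires the source links. -/
def failEvt (fls : FlowEle St) (ptl ptt opn : String) : ES St :=
  .atom {(EvtLbl.invoke ptl ptt opn, {s | targetsSat fls.targets s},
          Imp.basic (fireSources fls.sources))}

mutual
/-- The verified translation from BPEL activities to PiCore event systems. -/
def compile : Activity St → ES St
  | .invoke fls ptl ptt opn spc cts cta =>
      .choice
        (.atom {(EvtLbl.invoke ptl ptt opn, {s | targetsSat fls.targets s},
            Imp.seq (.basic spc) (.basic (fireSources fls.sources)))})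
        (chooseList
          (.seq (failEvt targetsSat fireSources fls ptl ptt opn) (compile cta) ::
            compileList fls ptl ptt opn cts))
  | .receive fls ptl ptt opn spc =>
      .atom {(EvtLbl.receive ptl ptt opn, {s | targetsSat fls.targets s},
          Imp.seq (.basic spc) (.basic (fireSources fls.sources)))}
  | .reply fls ptl ptt opn =>
      .atom {(EvtLbl.reply ptl ptt opn, {s | targetsSat fls.targets s},
          Imp.basic (fireSources fls.sources))}
  | .assign fls spc =>
      .atom {(EvtLbl.assign, {s | targetsSat fls.targets s},
          Imp.seq (.basic spc) (.basic (fireSources fls.sources)))}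
  | .wait fls time =>
      .atom {(EvtLbl.wait, {s | targetsSat fls.targets s ∧ time > tick s},
          Imp.basic (fireSources fls.sources))}
  | .empty fls =>
      .atom {(EvtLbl.empty, {s | targetsSat fls.targets s},
          Imp.basic (fireSources fls.sources))}
  | .seq A1 A2 => .seq (compile A1) (compile A2)
  | .ifA c A1 A2 =>
      .choice (.seq (.atom {(EvtLbl.ifT, c, SKIP St)}) (compile A1))
              (.seq (.atom {(EvtLbl.ifF, cᶜ, SKIP St)}) (compile A2))
  | .whileA c A => .iter c (compile A)
  | .flow A1 A2 => .join (compile A1) (compile A2)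
  | .pick H1 H2 => .choice (compileEH H1) (compileEH H2)
  | .fin => .trig .fin

/-- Translation of BPEL event handlers. -/
def compileEH : EventHandler St → ES St
  | .onMessage ptl ptt opn spc A =>
      .seq (.atom {(EvtLbl.onMessage ptl ptt opn, Set.univ, Imp.basic spc)})
           (compile A)
  | .onAlarm time A =>
      .seq (.atom {(EvtLbl.onAlarm, {s | time > tick s}, SKIP St)})
           (compile A)

/-- Translation of the fault handlers of an `invoke` activity. -/
def compileList (fls : FlowEle St) (ptl ptt opn : String) :
    List (String × Activity St) → List (ES St)
  | [] => []
  | (_, a) :: rest =>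
      .seq (failEvt targetsSat fireSources fls ptl ptt opn) (compile a) ::
        compileList fls ptl ptt opn rest
end

end Compile



section Bisim
variable {St : Type}
variable (tick : St → ℕ)
variable (targetsSat : Option ((St → Prop) × List String) → St → Prop)
variable (fireSources : Option (List (String × (St → Prop))) → St → St)

/-- The small-step semantics of the PiCore event systems used by the BPEL
translation (over the IMP-like language, with a trivial static configuration
and trivial event-system identifiers). -/
abbrev esStepB :
    ES St × St → PiCore.TranKind EvtLbl × Unit → ES St × St → Prop :=
  PiCore.esStep Unit (fun _ : Unit => impTran) Imp.fin ()

/-- Computations of BPEL activities: nonempty lists of configurations closed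
under singletons, environment steps and BPEL steps. -/
inductive bpelCpts : List (Activity St × St) → Prop where
  | one {B s} : bpelCpts [(B, s)]
  | env {B s t cs} (h : bpelCpts ((B, t) :: cs)) :
      bpelCpts ((B, s) :: (B, t) :: cs)
  | step {B B' s t cs}
      (h : bpelStep tick targetsSat fireSources B s B' t)
      (h2 : bpelCpts ((B', t) :: cs)) :
      bpelCpts ((B, s) :: (B', t) :: cs)

/-- Pointwise equivalence of a BPEL computation and a PiCore computation:
equal length, equal states at each position, and at each position the event
system is the translation of the activity. -/
def treq : List (Activity St × St) → List (ES St × St) → Prop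
  | [], [] => True
  | (B, s) :: tr1, (S, t) :: tr2 =>
      compile tick targetsSat fireSources B = S ∧ s = t ∧ treq tr1 tr2
  | _, _ => False

/-- Trace equivalence of a BPEL activity and a PiCore event system from a
common initial state: `Σ ⊢ (B,s) ≈≈ (ES,s)`. -/
def TraceEq (B : Activity St) (s : St) (S : ES St) : Prop :=
  (∀ tr : List (Activity St × St),
     bpelCpts tick targetsSat fireSources tr → tr.head? = some (B, s) →
     ∃ tr' : List (ES St × St),
       (PiCore.cpts Unit (fun _ : Unit => impTran) Imp.fin () tr' ∧
         tr'.head? = some (S, s)) ∧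
       treq tick targetsSat fireSources tr tr') ∧
  (∀ tr' : List (ES St × St),
     PiCore.cpts Unit (fun _ : Unit => impTran) Imp.fin () tr' →
     tr'.head? = some (S, s) →
     ∃ tr : List (Activity St × St),
       (bpelCpts tick targetsSat fireSources tr ∧ tr.head? = some (B, s)) ∧
       treq tick targetsSat fireSources tr tr')

/-- `R` is a bisimulation between BPEL activities and PiCore event systems. -/
def IsBisim (R : Activity St → St → ES St → Prop) : Prop :=
  ∀ B s S, R B s S →
    (∀ B' t, bpelStep tick targetsSat fireSources B s B' t →
      ∃ (δ : PiCore.TranKind EvtLbl × Unit) (S' : ES St),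
        esStepB (S, s) δ (S', t) ∧ R B' t S') ∧
    (∀ (δ : PiCore.TranKind EvtLbl × Unit) (S' : ES St) (t : St),
      esStepB (S, s) δ (S', t) →
      ∃ B' : Activity St,
        bpelStep tick targetsSat fireSources B s B' t ∧ R B' t S') ∧
    S = compile tick targetsSat fireSources B

/-- Bisimilarity of a BPEL activity and a PiCore event system at a state
(`Σ ⊢ (B,s) ≈ (ES,s)`): the greatest bisimulation. -/
def Bisim (B : Activity St) (s : St) (S : ES St) : Prop :=
  ∃ R : Activity St → St → ES St → Prop,
    IsBisim tick targetsSat fireSources R ∧ R B s S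

end Bisim

end BPEL

/-! The graph of `compile` is itself a bisimulation, with the identity on states: every BPEL rule
is matched by the PiCore rule of the compiled construct, and inverting the PiCore rules on a
compiled event system gives back a BPEL step, because the IMP body of an atomic event is
deterministic and so runs to a unique final state. Since the graph does not mention the state, it
is preserved by environment steps, so it can be followed along computations in both directions.
Clause (3) of bisimilarity puts every bisimilar pair in this graph. -/

namespace PiCore

variable {Lbl Prog St Env K : Type} {ptran : Env → Prog × St → Prog × St → Prop}
  {bot : Prog} {Γ : Env} {l : Lbl} {g : Set St} {P : Prog} {s t : St} {δ : TranKind Lbl × K}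
  {S' : EventSys Lbl Prog St}

theorem not_esStep_trig (hbot : ∀ c, ¬ ptran Γ (bot, s) c) :
    ¬ esStep K ptran bot Γ (.trig bot, s) δ (S', t) := by
  intro h
  cases h with
  | trigEvt h => exact hbot _ h

theorem esStep_atom_singleton_inv
    (h : esStep K ptran bot Γ (.atom {(l, g, P)}, s) δ (S', t)) :
    s ∈ g ∧ S' = .trig bot ∧ Relation.ReflTransGen (ptran Γ) (P, s) (bot, t) := by
  cases h with
  | atomEvt hmem hg hrun =>
    simp only [Set.mem_singleton_iff, Prod.mk.injEq] at hmem
    obtain ⟨-, rfl, rfl⟩ := hmem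
    exact ⟨hg, rfl, hrun⟩

theorem esStep_seq_atom_singleton_inv {X : EventSys Lbl Prog St}
    (h : esStep K ptran bot Γ (.seq (.atom {(l, g, P)}) X, s) δ (S', t)) :
    s ∈ g ∧ S' = X ∧ Relation.ReflTransGen (ptran Γ) (P, s) (bot, t) := by
  cases h with
  | seqStep h hne => exact absurd (esStep_atom_singleton_inv h).2.1 hne
  | seqFin h =>
    obtain ⟨hg, -, hrun⟩ := esStep_atom_singleton_inv h
    exact ⟨hg, rfl, hrun⟩

end PiCore

namespace BPEL

open PiCore Relation

variable {St : Type}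

theorem not_impTran_fin {s : St} {c : Imp St × St} : ¬ impTran (.fin, s) c := nofun

theorem impTran_rightUnique : Relator.RightUnique (@impTran St) := by
  intro c c₁ c₂ h₁ h₂
  induction h₁ generalizing c₂ with
  | basic => cases h₂; rfl
  | seqStep h hne ih =>
    cases h₂ with
    | seqStep h' _ => obtain ⟨rfl, rfl⟩ := Prod.mk.inj (ih h'); rfl
    | seqFin h' => exact absurd (congrArg Prod.fst (ih h')) hne
  | seqFin h ih =>
    cases h₂ with
    | seqStep h' hne' => exact absurd (congrArg Prod.fst (ih h')).symm hne'
    | seqFin h' => obtain ⟨-, rfl⟩ := Prod.mk.inj (ih h'); rfl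

theorem eq_of_impTran_runs_fin {c : Imp St × St} {t t' : St}
    (h : ReflTransGen impTran c (.fin, t)) (h' : ReflTransGen impTran c (.fin, t')) :
    t = t' := by
  have of_fin : ∀ {t t' : St}, ReflTransGen impTran (.fin, t) (.fin, t') → t = t' := fun h =>
    (ReflTransGen.cases_head h).elim (congrArg Prod.snd)
      fun ⟨_, hstep, _⟩ => absurd hstep not_impTran_fin
  rcases ReflTransGen.total_of_right_unique impTran_rightUnique h h' with h'' | h''
  exacts [of_fin h'', (of_fin h'').symm]

theorem impTran_run_basic_iff {f : St → St} {s t : St} :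
    ReflTransGen impTran (.basic f, s) (.fin, t) ↔ t = f s :=
  ⟨fun h => eq_of_impTran_runs_fin h (.single .basic), fun e => e ▸ .single .basic⟩

theorem impTran_run_seq_basic_iff {f g : St → St} {s t : St} :
    ReflTransGen impTran (.seq (.basic f) (.basic g), s) (.fin, t) ↔ t = g (f s) := by
  have hrun : ReflTransGen impTran (.seq (.basic f) (.basic g), s) (.fin, g (f s)) :=
    .head (.seqFin .basic) (.single .basic)
  exact ⟨fun h => eq_of_impTran_runs_fin h hrun, fun e => e ▸ hrun⟩

section AtomicEvents

variable {l : EvtLbl} {g : Set St} {f f' : St → St} {s t : St} {δ : TranKind EvtLbl × Unit}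
  {S' X : ES St}

theorem esStepB_atom_basic (hg : s ∈ g) :
    esStepB (.atom {(l, g, .basic f)}, s) (.aevt l, ()) (.trig .fin, f s) :=
  .atomEvt rfl hg (impTran_run_basic_iff.mpr rfl)

theorem esStepB_atom_seq_basic (hg : s ∈ g) :
    esStepB (.atom {(l, g, .seq (.basic f) (.basic f'))}, s) (.aevt l, ()) (.trig .fin, f' (f s)) :=
  .atomEvt rfl hg (impTran_run_seq_basic_iff.mpr rfl)

theorem esStepB_atom_basic_inv (h : esStepB (.atom {(l, g, .basic f)}, s) δ (S', t)) :
    s ∈ g ∧ S' = .trig .fin ∧ t = f s :=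
  let ⟨hg, hS', hrun⟩ := esStep_atom_singleton_inv h
  ⟨hg, hS', impTran_run_basic_iff.mp hrun⟩

theorem esStepB_atom_seq_basic_inv
    (h : esStepB (.atom {(l, g, .seq (.basic f) (.basic f'))}, s) δ (S', t)) :
    s ∈ g ∧ S' = .trig .fin ∧ t = f' (f s) :=
  let ⟨hg, hS', hrun⟩ := esStep_atom_singleton_inv h
  ⟨hg, hS', impTran_run_seq_basic_iff.mp hrun⟩

theorem esStepB_seq_atom_basic_inv (h : esStepB (.seq (.atom {(l, g, .basic f)}) X, s) δ (S', t)) :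
    s ∈ g ∧ S' = X ∧ t = f s :=
  let ⟨hg, hS', hrun⟩ := esStep_seq_atom_singleton_inv h
  ⟨hg, hS', impTran_run_basic_iff.mp hrun⟩

end AtomicEvents

theorem not_esStepB_trig_fin {s t : St} {δ : TranKind EvtLbl × Unit} {S' : ES St} :
    ¬ esStepB (.trig .fin, s) δ (S', t) :=
  not_esStep_trig fun _ => not_impTran_fin

theorem esStepB_chooseList_iff :
    ∀ {L : List (ES St)} {s t : St} {δ : TranKind EvtLbl × Unit} {S' : ES St},
      esStepB (chooseList L, s) δ (S', t) ↔ ∃ E ∈ L, esStepB (E, s) δ (S', t)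
  | [], _, _, _, _ => by simpa [chooseList] using not_esStepB_trig_fin
  | [a], _, _, _, _ => by simp [chooseList]
  | a :: b :: l, s, t, δ, S' => by
    rw [List.exists_mem_cons_iff, ← esStepB_chooseList_iff]
    constructor
    · intro h
      cases h with
      | choice1 h => exact .inl h
      | choice2 h => exact .inr h
    · rintro (h | h)
      exacts [.choice1 h, .choice2 h]

section Compile

variable (tick : St → ℕ)
variable (targetsSat : Option ((St → Prop) × List String) → St → Prop)
variable (fireSources : Option (List (String × (St → Prop))) → St → St)

theorem compile_eq_fin_iff (A : Activity St) :
    compile tick targetsSat fireSources A = .trig .fin ↔ A = .fin := by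
  cases A <;> simp [compile]

theorem compileList_eq_map (fls : FlowEle St) (ptl ptt opn : String)
    (cts : List (String × Activity St)) :
    compileList tick targetsSat fireSources fls ptl ptt opn cts =
      (cts.map Prod.snd).map fun a => .seq (failEvt targetsSat fireSources fls ptl ptt opn)
        (compile tick targetsSat fireSources a) := by
  induction cts with
  | nil => rfl
  | cons c cts ih => simp only [compileList, ih, List.map_cons]

theorem exists_esStepB_compileEH_of_ehStep {H : EventHandler St} {A : Activity St} {s t : St}
    (h : ehStep tick H s A t) :
    ∃ δ, esStepB (compileEH tick targetsSat fireSources H, s) δ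
      (compile tick targetsSat fireSources A, t) := by
  cases h with
  | onMessage => exact ⟨_, .seqFin (esStepB_atom_basic (Set.mem_univ _))⟩
  | onAlarm h => exact ⟨_, .seqFin (esStepB_atom_basic h)⟩

theorem exists_esStepB_compile_of_bpelStep {B B' : Activity St} {s t : St}
    (h : bpelStep tick targetsSat fireSources B s B' t) :
    ∃ δ, esStepB (compile tick targetsSat fireSources B, s) δ
      (compile tick targetsSat fireSources B', t) := by
  induction h with
  | invokeSuc h => exact ⟨_, .choice1 (esStepB_atom_seq_basic h)⟩
  | @invokeFault fls ptl ptt opn _ _ _ _ _ h hm =>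
    have hfault := esStepB_atom_basic (l := .invoke ptl ptt opn) (f := fireSources fls.sources) h
    refine ⟨_, .choice2 (esStepB_chooseList_iff.mpr ⟨_, ?_, .seqFin hfault⟩)⟩
    rw [compileList_eq_map]
    rcases hm with hm | rfl
    exacts [List.mem_cons_of_mem _ (List.mem_map_of_mem hm), List.mem_cons_self]
  | receive h => exact ⟨_, esStepB_atom_seq_basic h⟩
  | reply h => exact ⟨_, esStepB_atom_basic h⟩
  | assign h => exact ⟨_, esStepB_atom_seq_basic h⟩
  | wait h ht => exact ⟨_, esStepB_atom_basic ⟨h, ht⟩⟩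
  | empty h => exact ⟨_, esStepB_atom_basic h⟩
  | seqStep _ hne ih =>
    obtain ⟨δ, h⟩ := ih
    exact ⟨δ, .seqStep h (mt (compile_eq_fin_iff tick targetsSat fireSources _).mp hne)⟩
  | seqFin _ ih =>
    obtain ⟨δ, h⟩ := ih
    exact ⟨δ, .seqFin h⟩
  | ifT h => exact ⟨_, .choice1 (.seqFin (esStepB_atom_basic h))⟩
  | ifF h => exact ⟨_, .choice2 (.seqFin (esStepB_atom_basic h))⟩
  | whileT h hne =>
    exact ⟨(.tau, ()), .iterT h (mt (compile_eq_fin_iff tick targetsSat fireSources _).mp hne)⟩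
  | whileF h => exact ⟨(.tau, ()), .iterF h⟩
  | flow1 _ ih =>
    obtain ⟨δ, h⟩ := ih
    exact ⟨δ, .join1 h⟩
  | flow2 _ ih =>
    obtain ⟨δ, h⟩ := ih
    exact ⟨δ, .join2 h⟩
  | flowFin => exact ⟨(.tau, ()), .joinFin⟩
  | pick1 h =>
    obtain ⟨δ, h⟩ := exists_esStepB_compileEH_of_ehStep tick targetsSat fireSources h
    exact ⟨δ, .choice1 h⟩
  | pick2 h =>
    obtain ⟨δ, h⟩ := exists_esStepB_compileEH_of_ehStep tick targetsSat fireSources h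
    exact ⟨δ, .choice2 h⟩

theorem exists_ehStep_of_esStepB_compileEH {H : EventHandler St} {s t : St}
    {δ : TranKind EvtLbl × Unit} {S' : ES St}
    (h : esStepB (compileEH tick targetsSat fireSources H, s) δ (S', t)) :
    ∃ A, ehStep tick H s A t ∧ S' = compile tick targetsSat fireSources A := by
  cases H with
  | onMessage ptl ptt opn spc A =>
    obtain ⟨-, rfl, rfl⟩ := esStepB_seq_atom_basic_inv h
    exact ⟨A, .onMessage, rfl⟩
  | onAlarm time A =>
    obtain ⟨hg, rfl, rfl⟩ := esStepB_seq_atom_basic_inv h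
    exact ⟨A, .onAlarm hg, rfl⟩

def CompileReflectsSteps (A : Activity St) : Prop :=
  ∀ ⦃s t : St⦄ ⦃δ : TranKind EvtLbl × Unit⦄ ⦃S' : ES St⦄,
    esStepB (compile tick targetsSat fireSources A, s) δ (S', t) →
      ∃ A', bpelStep tick targetsSat fireSources A s A' t ∧
        S' = compile tick targetsSat fireSources A'

theorem compileReflectsSteps_invoke (fls : FlowEle St) (ptl ptt opn : String) (spc : St → St)
    (cts : List (String × Activity St)) (cta : Activity St) :
    CompileReflectsSteps tick targetsSat fireSources (.invoke fls ptl ptt opn spc cts cta) := by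
  intro s t δ S' h
  cases h with
  | choice1 h =>
    obtain ⟨hg, rfl, rfl⟩ := esStepB_atom_seq_basic_inv h
    exact ⟨.fin, .invokeSuc hg, rfl⟩
  | choice2 h =>
    rw [compileList_eq_map] at h
    obtain ⟨E, hE, h⟩ := esStepB_chooseList_iff.mp h
    obtain ⟨a, ha, rfl⟩ : ∃ a, (a ∈ cts.map Prod.snd ∨ a = cta) ∧
        E = .seq (failEvt targetsSat fireSources fls ptl ptt opn)
          (compile tick targetsSat fireSources a) := by
      rcases List.mem_cons.mp hE with rfl | hE
      · exact ⟨cta, .inr rfl, rfl⟩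
      · obtain ⟨a, ha, rfl⟩ := List.mem_map.mp hE
        exact ⟨a, .inl ha, rfl⟩
    obtain ⟨hg, rfl, rfl⟩ := esStepB_seq_atom_basic_inv h
    exact ⟨a, .invokeFault hg ha, rfl⟩

theorem CompileReflectsSteps.seq {A₁ : Activity St} (A₂ : Activity St)
    (h₁ : CompileReflectsSteps tick targetsSat fireSources A₁) :
    CompileReflectsSteps tick targetsSat fireSources (.seq A₁ A₂) := by
  intro s t δ S' h
  cases h with
  | seqStep h hne =>
    obtain ⟨A₁', hA₁, rfl⟩ := h₁ h
    exact ⟨.seq A₁' A₂,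
      .seqStep hA₁ (mt (compile_eq_fin_iff tick targetsSat fireSources _).mpr hne), rfl⟩
  | seqFin h =>
    obtain ⟨A₁', hA₁, hfin⟩ := h₁ h
    obtain rfl := (compile_eq_fin_iff tick targetsSat fireSources A₁').mp hfin.symm
    exact ⟨A₂, .seqFin hA₁, rfl⟩

theorem CompileReflectsSteps.flow {A₁ A₂ : Activity St}
    (h₁ : CompileReflectsSteps tick targetsSat fireSources A₁)
    (h₂ : CompileReflectsSteps tick targetsSat fireSources A₂) :
    CompileReflectsSteps tick targetsSat fireSources (.flow A₁ A₂) := by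
  intro s t δ S' h
  simp only [compile] at h
  generalize hX₁ : compile tick targetsSat fireSources A₁ = X₁ at h
  generalize hX₂ : compile tick targetsSat fireSources A₂ = X₂ at h
  cases h with
  | join1 h =>
    subst hX₁ hX₂
    obtain ⟨A₁', hA₁, rfl⟩ := h₁ h
    exact ⟨.flow A₁' A₂, .flow1 hA₁, rfl⟩
  | join2 h =>
    subst hX₁ hX₂
    obtain ⟨A₂', hA₂, rfl⟩ := h₂ h
    exact ⟨.flow A₁ A₂', .flow2 hA₂, rfl⟩
  | joinFin =>
    obtain rfl := (compile_eq_fin_iff tick targetsSat fireSources A₁).mp hX₁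
    obtain rfl := (compile_eq_fin_iff tick targetsSat fireSources A₂).mp hX₂
    exact ⟨.fin, .flowFin, rfl⟩

theorem compileReflectsSteps_pick (H₁ H₂ : EventHandler St) :
    CompileReflectsSteps tick targetsSat fireSources (.pick H₁ H₂) := by
  intro s t δ S' h
  cases h with
  | choice1 h =>
    obtain ⟨A, hA, rfl⟩ := exists_ehStep_of_esStepB_compileEH tick targetsSat fireSources h
    exact ⟨A, .pick1 hA, rfl⟩
  | choice2 h =>
    obtain ⟨A, hA, rfl⟩ := exists_ehStep_of_esStepB_compileEH tick targetsSat fireSources h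
    exact ⟨A, .pick2 hA, rfl⟩

theorem compileReflectsSteps :
    ∀ A : Activity St, CompileReflectsSteps tick targetsSat fireSources A
  | .invoke fls ptl ptt opn spc cts cta =>
    compileReflectsSteps_invoke tick targetsSat fireSources fls ptl ptt opn spc cts cta
  | .receive fls ptl ptt opn spc => fun s t δ S' h => by
    obtain ⟨hg, rfl, rfl⟩ := esStepB_atom_seq_basic_inv h
    exact ⟨.fin, .receive hg, rfl⟩
  | .reply fls ptl ptt opn => fun s t δ S' h => by
    obtain ⟨hg, rfl, rfl⟩ := esStepB_atom_basic_inv h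
    exact ⟨.fin, .reply hg, rfl⟩
  | .assign fls spc => fun s t δ S' h => by
    obtain ⟨hg, rfl, rfl⟩ := esStepB_atom_seq_basic_inv h
    exact ⟨.fin, .assign hg, rfl⟩
  | .wait fls time => fun s t δ S' h => by
    obtain ⟨⟨hg, ht⟩, rfl, rfl⟩ := esStepB_atom_basic_inv h
    exact ⟨.fin, .wait hg ht, rfl⟩
  | .empty fls => fun s t δ S' h => by
    obtain ⟨hg, rfl, rfl⟩ := esStepB_atom_basic_inv h
    exact ⟨.fin, .empty hg, rfl⟩
  | .seq A₁ A₂ => (compileReflectsSteps A₁).seq tick targetsSat fireSources A₂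
  | .ifA c A₁ A₂ => fun s t δ S' h => by
    cases h with
    | choice1 h =>
      obtain ⟨hc, rfl, rfl⟩ := esStepB_seq_atom_basic_inv h
      exact ⟨A₁, .ifT hc, rfl⟩
    | choice2 h =>
      obtain ⟨hc, rfl, rfl⟩ := esStepB_seq_atom_basic_inv h
      exact ⟨A₂, .ifF hc, rfl⟩
  | .whileA c A => fun s t δ S' h => by
    cases h with
    | iterT hc hne =>
      exact ⟨.seq A (.whileA c A),
        .whileT hc (mt (compile_eq_fin_iff tick targetsSat fireSources _).mpr hne), rfl⟩
    | iterF hc => exact ⟨.fin, .whileF hc, rfl⟩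
  | .flow A₁ A₂ => (compileReflectsSteps A₁).flow tick targetsSat fireSources
      (compileReflectsSteps A₂)
  | .pick H₁ H₂ => compileReflectsSteps_pick tick targetsSat fireSources H₁ H₂
  | .fin => fun _ _ _ _ h => absurd h not_esStepB_trig_fin

theorem isBisim_compile :
    IsBisim tick targetsSat fireSources fun B _ S => S = compile tick targetsSat fireSources B := by
  rintro B s _ rfl
  refine ⟨fun B' t h => ?_, fun δ S' t h => compileReflectsSteps tick targetsSat fireSources B h,
    rfl⟩
  obtain ⟨δ, h⟩ := exists_esStepB_compile_of_bpelStep tick targetsSat fireSources h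
  exact ⟨δ, _, h, rfl⟩

end Compile

section Traces

variable {tick : St → ℕ}
variable {targetsSat : Option ((St → Prop) × List String) → St → Prop}
variable {fireSources : Option (List (String × (St → Prop))) → St → St}
variable {R : Activity St → St → ES St → Prop}

theorem IsBisim.exists_cpts_of_bpelCpts (hR : IsBisim tick targetsSat fireSources R)
    (henv : ∀ B s t S, R B s S → R B t S) {tr : List (Activity St × St)}
    (htr : bpelCpts tick targetsSat fireSources tr) :
    ∀ {B s S}, tr.head? = some (B, s) → R B s S →
      ∃ tr', (cpts Unit (fun _ : Unit => impTran) Imp.fin () tr' ∧ tr'.head? = some (S, s)) ∧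
        treq tick targetsSat fireSources tr tr' := by
  induction htr with
  | @one B s =>
    rintro _ _ S ⟨⟩ hBS
    exact ⟨[(S, s)], ⟨.one, rfl⟩, (hR _ _ _ hBS).2.2.symm, rfl, trivial⟩
  | @env _ s _ _ _ ih =>
    rintro _ _ S ⟨⟩ hBS
    obtain ⟨tr', ⟨hc, hh⟩, htreq⟩ := ih rfl (henv _ _ _ _ hBS)
    obtain ⟨cs', rfl⟩ := List.head?_eq_some_iff.mp hh
    exact ⟨(S, s) :: (S, _) :: cs', ⟨.env hc, rfl⟩, (hR _ _ _ hBS).2.2.symm, rfl, htreq⟩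
  | @step _ _ s _ _ hstep _ ih =>
    rintro _ _ S ⟨⟩ hBS
    obtain ⟨δ, S', hS', hR'⟩ := (hR _ _ _ hBS).1 _ _ hstep
    obtain ⟨tr', ⟨hc, hh⟩, htreq⟩ := ih rfl hR'
    obtain ⟨cs', rfl⟩ := List.head?_eq_some_iff.mp hh
    exact ⟨(S, s) :: (S', _) :: cs', ⟨.act hS' hc, rfl⟩, (hR _ _ _ hBS).2.2.symm, rfl,
      htreq⟩

theorem IsBisim.exists_bpelCpts_of_cpts (hR : IsBisim tick targetsSat fireSources R)
    (henv : ∀ B s t S, R B s S → R B t S) {tr' : List (ES St × St)}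
    (htr' : cpts Unit (fun _ : Unit => impTran) Imp.fin () tr') :
    ∀ {B s S}, tr'.head? = some (S, s) → R B s S →
      ∃ tr, (bpelCpts tick targetsSat fireSources tr ∧ tr.head? = some (B, s)) ∧
        treq tick targetsSat fireSources tr tr' := by
  induction htr' with
  | @one _ s =>
    rintro B _ _ ⟨⟩ hBS
    exact ⟨[(B, s)], ⟨.one, rfl⟩, (hR _ _ _ hBS).2.2.symm, rfl, trivial⟩
  | @env _ s _ _ _ ih =>
    rintro B _ _ ⟨⟩ hBS
    obtain ⟨tr, ⟨hc, hh⟩, htreq⟩ := ih rfl (henv _ _ _ _ hBS)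
    obtain ⟨cs, rfl⟩ := List.head?_eq_some_iff.mp hh
    exact ⟨(B, s) :: (B, _) :: cs, ⟨.env hc, rfl⟩, (hR _ _ _ hBS).2.2.symm, rfl, htreq⟩
  | @act _ _ s _ _ _ hstep _ ih =>
    rintro B _ _ ⟨⟩ hBS
    obtain ⟨B', hB', hR'⟩ := (hR _ _ _ hBS).2.1 _ _ _ hstep
    obtain ⟨tr, ⟨hc, hh⟩, htreq⟩ := ih rfl hR'
    obtain ⟨cs, rfl⟩ := List.head?_eq_some_iff.mp hh
    exact ⟨(B, s) :: (B', _) :: cs, ⟨.step hB' hc, rfl⟩, (hR _ _ _ hBS).2.2.symm, rfl,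
      htreq⟩

theorem IsBisim.traceEq (hR : IsBisim tick targetsSat fireSources R)
    (henv : ∀ B s t S, R B s S → R B t S) {B : Activity St} {s : St} {S : ES St}
    (hBS : R B s S) : TraceEq tick targetsSat fireSources B s S :=
  ⟨fun _ htr hh => hR.exists_cpts_of_bpelCpts henv htr hh hBS,
    fun _ htr' hh => hR.exists_bpelCpts_of_cpts henv htr' hh hBS⟩

end Traces

end BPEL

open PiCore BPEL in
/-- **Soundness of the BPEL/PiCore bisimulation:** bisimilarity implies trace
equivalence. -/
theorem bisim_sound {St : Type}
    (tick : St → ℕ)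
    (targetsSat : Option ((St → Prop) × List String) → St → Prop)
    (fireSources : Option (List (String × (St → Prop))) → St → St) :
    ∀ (B : Activity St) (S : ES St) (s : St),
      Bisim tick targetsSat fireSources B s S →
      TraceEq tick targetsSat fireSources B s S := by
  rintro B S s ⟨R, hR, hBS⟩
  have hS : S = compile tick targetsSat fireSources B := (hR B s S hBS).2.2
  exact (isBisim_compile tick targetsSat fireSources).traceEq (fun _ _ _ _ h => h) hS
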